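/- For any ℂ-linear map D on a unital commutative associative ℂ-algebra V, any integer l ≥ 1 and any elements f_1,…,f_l ∈ V, the Koszul bracket hierarchy is given by the explicit formula ⟨f_1,…,f_l⟩_l^D = Σ_{I ⊆ {1,…,l}, |I| ≥ 1} (−1)^{l−|I|} · D(f_I) · f_{{1,…,l}∖I}. -/
import Mathlib

/-- The Koszul bracket hierarchy of an operator `D` on a commutative algebra:
`⟨f⟩₁ = D f` and
`⟨f₁,…,f_{l+1}⟩_{l+1} = ⟨f₁,…,f_{l-1},f_l·f_{l+1}⟩_l − ⟨f₁,…,f_l⟩_l·f_{l+1} − f_l·⟨f₁,…,f_{l-1},f_{l+1}⟩_l`. -/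
def koszul {V : Type*} [CommRing V] (D : V → V) : (l : ℕ) → (Fin l → V) → V
  | 0, _ => 0
  | 1, f => D (f 0)
  | l + 2, f =>
      koszul D (l + 1)
        (Fin.snoc (fun i : Fin l => f i.castSucc.castSucc)
          (f ⟨l, by omega⟩ * f ⟨l + 1, by omega⟩))
      - koszul D (l + 1) (fun i => f i.castSucc) * f ⟨l + 1, by omega⟩
      - f ⟨l, by omega⟩ *
          koszul D (l + 1)
            (Fin.snoc (fun i : Fin l => f i.castSucc.castSucc) (f ⟨l + 1, by omega⟩))

/-- `D` is a differential operator of order at most `l` if the `(l+1)`-st Koszul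
bracket vanishes identically. -/
def IsDiffOpOfOrderAtMost {V : Type*} [CommRing V] (D : V → V) (l : ℕ) : Prop :=
  ∀ f : Fin (l + 1) → V, koszul D (l + 1) f = 0

section Aux

open Finset

lemma last_not_mem_map {n : ℕ} (S : Finset (Fin n)) :
    Fin.last n ∉ S.map Fin.castSuccEmb := by
  simp only [Finset.mem_map, Fin.coe_castSuccEmb]
  rintro ⟨a, -, h⟩
  exact (Fin.castSucc_lt_last a).ne h

lemma compl_map {n : ℕ} (J : Finset (Fin n)) :
    (J.map Fin.castSuccEmb)ᶜ = insert (Fin.last n) (Jᶜ.map Fin.castSuccEmb) := by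
  ext x
  simp only [Finset.mem_compl, Finset.mem_map, Finset.mem_insert, Fin.coe_castSuccEmb]
  cases x using Fin.lastCases with
  | last =>
      simp only [true_or, iff_true]
      rintro ⟨a, -, h⟩
      exact (Fin.castSucc_lt_last a).ne h
  | cast i =>
      constructor
      · intro h
        exact Or.inr ⟨i, fun hi => h ⟨i, hi, rfl⟩, rfl⟩
      · rintro (h | ⟨a, ha, h⟩) ⟨b, hb, hb'⟩
        · exact (Fin.castSucc_lt_last i).ne h
        · rw [Fin.castSucc_inj] at h hb'; subst h; subst hb'; exact ha hb

lemma compl_insert_last {n : ℕ} (J : Finset (Fin n)) :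
    (insert (Fin.last n) (J.map Fin.castSuccEmb))ᶜ = Jᶜ.map Fin.castSuccEmb := by
  rw [Finset.compl_insert, compl_map, Finset.erase_insert (last_not_mem_map _)]

lemma sum_powerset_map {α β V : Type*} [AddCommMonoid V] (e : α ↪ β) (s : Finset α)
    (T : Finset β → V) :
    ∑ t ∈ (s.map e).powerset, T t = ∑ J ∈ s.powerset, T (J.map e) := by
  refine (Finset.sum_bij (fun J _ => J.map e) ?_ ?_ ?_ ?_).symm
  · intro J hJ
    exact Finset.mem_powerset.mpr (Finset.map_subset_map.mpr (Finset.mem_powerset.mp hJ))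
  · intro J _ K _ h
    exact Finset.map_injective e h
  · intro t ht
    obtain ⟨u, hu, rfl⟩ := Finset.subset_map_iff.mp (Finset.mem_powerset.mp ht)
    exact ⟨u, Finset.mem_powerset.mpr hu, rfl⟩
  · intros; rfl

lemma sum_powerset_fin {V : Type*} [AddCommMonoid V] {n : ℕ} (T : Finset (Fin (n + 1)) → V) :
    ∑ I ∈ (Finset.univ : Finset (Fin (n + 1))).powerset, T I
      = ∑ J ∈ (Finset.univ : Finset (Fin n)).powerset,
          (T (J.map Fin.castSuccEmb) + T (insert (Fin.last n) (J.map Fin.castSuccEmb))) := by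
  rw [Fin.univ_castSuccEmb, Finset.cons_eq_insert,
    Finset.sum_powerset_insert (last_not_mem_map _), sum_powerset_map, sum_powerset_map,
    ← Finset.sum_add_distrib]

variable {V : Type*} [CommRing V]

/-- Full-powerset version of the explicit Koszul formula. -/
def Gk (D : V → V) (l : ℕ) (f : Fin l → V) : V :=
  ∑ I ∈ (Finset.univ : Finset (Fin l)).powerset,
    (-1 : V) ^ (l - I.card) * D (∏ i ∈ I, f i) * ∏ i ∈ Iᶜ, f i

/-- The empty-set term. -/
def Ek (D : V → V) (l : ℕ) (f : Fin l → V) : V :=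
  (-1 : V) ^ l * D 1 * ∏ i, f i

lemma castSucc_last_notMem {n : ℕ} (S : Finset (Fin n)) :
    (Fin.last n).castSucc ∉ (S.map Fin.castSuccEmb).map Fin.castSuccEmb := by
  intro h
  rw [show (Fin.last n).castSucc = Fin.castSuccEmb (Fin.last n) from rfl,
    Finset.mem_map' ] at h
  exact last_not_mem_map S h

lemma castSucc_last_ne {n : ℕ} : (Fin.last n).castSucc ≠ Fin.last (n + 1) :=
  (Fin.castSucc_lt_last _).ne

lemma last_ne_castSucc_last {n : ℕ} : Fin.last (n + 1) ≠ (Fin.last n).castSucc :=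
  (Fin.castSucc_lt_last _).ne'

lemma Gk_succ_succ (D : V → V) (l : ℕ) (f : Fin (l + 2) → V) :
    Gk D (l + 2) f =
      Gk D (l + 1)
        (Fin.snoc (fun i : Fin l => f i.castSucc.castSucc)
          (f ⟨l, by omega⟩ * f ⟨l + 1, by omega⟩))
      - Gk D (l + 1) (fun i => f i.castSucc) * f ⟨l + 1, by omega⟩
      - f ⟨l, by omega⟩ *
          Gk D (l + 1)
            (Fin.snoc (fun i : Fin l => f i.castSucc.castSucc) (f ⟨l + 1, by omega⟩)) := by
  have hb : (⟨l + 1, by omega⟩ : Fin (l + 2)) = Fin.last (l + 1) := rfl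
  have ha : (⟨l, by omega⟩ : Fin (l + 2)) = (Fin.last l).castSucc := rfl
  rw [hb, ha]
  unfold Gk
  rw [sum_powerset_fin, sum_powerset_fin, sum_powerset_fin, sum_powerset_fin, sum_powerset_fin,
    Finset.sum_mul, Finset.mul_sum, ← Finset.sum_sub_distrib, ← Finset.sum_sub_distrib]
  refine Finset.sum_congr rfl fun J hJ => ?_
  have hk : J.card ≤ l := by simpa using Finset.card_le_univ J
  obtain ⟨m, hm⟩ := Nat.le.dest hk
  simp only [compl_map, compl_insert_last]
  simp only [Finset.map_insert, Fin.coe_castSuccEmb, Finset.prod_map, Fin.snoc_castSucc,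
    Fin.snoc_last, Finset.card_map, Finset.prod_insert, Finset.card_insert_of_notMem,
    Finset.mem_insert, last_not_mem_map, castSucc_last_notMem, castSucc_last_ne,
    last_ne_castSucc_last, not_false_iff, or_self, or_false, false_or]
  rw [show f (Fin.last (l + 1)) * (f (Fin.last l).castSucc * ∏ x ∈ J, f x.castSucc.castSucc)
      = f (Fin.last l).castSucc * f (Fin.last (l + 1)) * ∏ x ∈ J, f x.castSucc.castSucc from by
      ring]
  rw [show l + 2 - #J = m + 2 from by omega, show l + 2 - (#J + 1) = m + 1 from by omega,
    show l + 2 - (#J + 1 + 1) = m from by omega, show l + 1 - #J = m + 1 from by omega,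
    show l + 1 - (#J + 1) = m from by omega]
  ring

lemma Ek_succ_succ (D : V → V) (l : ℕ) (f : Fin (l + 2) → V) :
    Ek D (l + 2) f =
      Ek D (l + 1)
        (Fin.snoc (fun i : Fin l => f i.castSucc.castSucc)
          (f ⟨l, by omega⟩ * f ⟨l + 1, by omega⟩))
      - Ek D (l + 1) (fun i => f i.castSucc) * f ⟨l + 1, by omega⟩
      - f ⟨l, by omega⟩ *
          Ek D (l + 1)
            (Fin.snoc (fun i : Fin l => f i.castSucc.castSucc) (f ⟨l + 1, by omega⟩)) := by
  have hb : (⟨l + 1, by omega⟩ : Fin (l + 2)) = Fin.last (l + 1) := rfl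
  have ha : (⟨l, by omega⟩ : Fin (l + 2)) = (Fin.last l).castSucc := rfl
  rw [hb, ha]
  unfold Ek
  rw [Fin.prod_univ_castSucc (n := l + 1)]
  simp only [Fin.prod_univ_castSucc (n := l), Fin.snoc_castSucc, Fin.snoc_last]
  ring

lemma koszul_eq (D : V → V) : ∀ l (f : Fin (l + 1) → V),
    koszul D (l + 1) f = Gk D (l + 1) f - Ek D (l + 1) f := by
  intro l
  induction l with
  | zero =>
      intro f
      have h1 : (Finset.univ : Finset (Fin 1)).powerset = {∅, {0}} := by decide
      have h2 : ({0} : Finset (Fin 1))ᶜ = ∅ := by decide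
      have h3 : (∅ : Finset (Fin 1))ᶜ = {0} := by decide
      simp only [koszul, Gk, Ek, h1]
      rw [Finset.sum_insert (by decide), Finset.sum_singleton]
      simp only [h2, h3, Finset.card_empty, Finset.card_singleton, Finset.prod_empty,
        Finset.prod_singleton, Fin.prod_univ_succ, Fin.prod_univ_zero, mul_one]
      norm_num
  | succ l ih =>
      intro f
      rw [koszul, ih, ih, ih, Gk_succ_succ, Ek_succ_succ]
      ring

end Aux

/-- Explicit formula for the Koszul bracket hierarchy:
`⟨f₁,…,f_l⟩_l^D = Σ_{∅ ≠ I ⊆ {1,…,l}} (−1)^{l−|I|} · D(f_I) · f_{Iᶜ}`. -/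
theorem koszul_explicit_formula {V : Type*} [CommRing V] [Algebra ℂ V]
    (D : V →ₗ[ℂ] V) (l : ℕ) (hl : 1 ≤ l) (f : Fin l → V) :
    koszul (⇑D) l f =
      ∑ I ∈ Finset.univ.powerset.filter (fun I : Finset (Fin l) => I.Nonempty),
        (-1 : V) ^ (l - I.card) * D (∏ i ∈ I, f i) * ∏ i ∈ Iᶜ, f i := by
  obtain ⟨n, rfl⟩ : ∃ n, l = n + 1 := ⟨l - 1, by omega⟩
  rw [koszul_eq]
  have hfilter : Finset.univ.powerset.filter (fun I : Finset (Fin (n + 1)) => I.Nonempty)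
      = (Finset.univ.powerset : Finset (Finset (Fin (n + 1)))).erase ∅ := by
    ext s
    simp [Finset.nonempty_iff_ne_empty, and_comm]
  rw [hfilter, Finset.sum_erase_eq_sub (Finset.empty_mem_powerset _)]
  simp only [Finset.card_empty, Finset.prod_empty, Nat.sub_zero, Finset.compl_empty]
  rfl
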